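/- For every distributed measurement M in R_BN and every ensemble G = {p(x,y), σ_xy}, the distributed-state-discrimination guessing probability satisfies p_DSD(G, M) ≤ (1 + RoBN(M)) · p_DSD(G). -/

import Mathlib

open Matrix BigOperators Kronecker ComplexOrder

noncomputable section

/-- Square complex matrices of size `n`. -/
abbrev Mat (n : ℕ) : Type := Matrix (Fin n) (Fin n) ℂ

/-- Bipartite complex matrices on `ℂ^m ⊗ ℂ^n`. -/
abbrev BMat (m n : ℕ) : Type := Matrix (Fin m × Fin n) (Fin m × Fin n) ℂ

/-- A density matrix: positive semidefinite with unit trace. -/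
def IsDensity {n : Type} [Fintype n] (ρ : Matrix n n ℂ) : Prop :=
  ρ.PosSemidef ∧ ρ.trace = 1

/-- A POVM: a finite family of positive semidefinite matrices summing to the identity. -/
def IsPOVM {ι n : Type} [Fintype ι] [Fintype n] [DecidableEq n]
    (M : ι → Matrix n n ℂ) : Prop :=
  (∀ i, (M i).PosSemidef) ∧ ∑ i, M i = 1

/-- A separable bipartite operator: a finite convex combination of products of
density matrices. -/
def SepState {dA dB : ℕ} (ρ : BMat dA dB) : Prop :=
  ∃ (n : ℕ) (p : Fin n → ℝ) (ρA : Fin n → Mat dA) (ρB : Fin n → Mat dB),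
    (∀ l, 0 ≤ p l) ∧ (∑ l, p l = 1) ∧
    (∀ l, IsDensity (ρA l)) ∧ (∀ l, IsDensity (ρB l)) ∧
    ρ = ∑ l, (p l : ℂ) • (ρA l ⊗ₖ ρB l)

/-- The element `tr_{A'B'}[(Ma ⊗ Mb)(1^A ⊗ ρ^{A'B'} ⊗ 1^B)]` of a distributed
measurement (written out entrywise, after the canonical reordering of tensor factors). -/
def distMeas {dA dA' dB' dB : ℕ}
    (Ma : Matrix (Fin dA × Fin dA') (Fin dA × Fin dA') ℂ)
    (Mb : Matrix (Fin dB' × Fin dB) (Fin dB' × Fin dB) ℂ)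
    (ρ : BMat dA' dB') : BMat dA dB :=
  Matrix.of fun pq rs =>
    ∑ k : Fin dA', ∑ l : Fin dB', ∑ k' : Fin dA', ∑ l' : Fin dB',
      Ma (pq.1, k) (rs.1, k') * Mb (l, pq.2) (l', rs.2) * ρ (k', l') (k, l)

/-- Membership in `R_BN`: the family arises from local POVMs and a shared state. -/
def MemRBN {dA dB oA oB : ℕ} (M : Fin oA → Fin oB → BMat dA dB) : Prop :=
  ∃ (dA' dB' : ℕ)
    (Ma : Fin oA → Matrix (Fin dA × Fin dA') (Fin dA × Fin dA') ℂ)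
    (Mb : Fin oB → Matrix (Fin dB' × Fin dB) (Fin dB' × Fin dB) ℂ)
    (ρ : BMat dA' dB'),
    IsPOVM Ma ∧ IsPOVM Mb ∧ IsDensity ρ ∧
    ∀ a b, M a b = distMeas (Ma a) (Mb b) ρ

/-- Membership in `F_BN`: the family arises from local POVMs and a separable shared state. -/
def MemFBN {dA dB oA oB : ℕ} (M : Fin oA → Fin oB → BMat dA dB) : Prop :=
  ∃ (dA' dB' : ℕ)
    (Ma : Fin oA → Matrix (Fin dA × Fin dA') (Fin dA × Fin dA') ℂ)
    (Mb : Fin oB → Matrix (Fin dB' × Fin dB) (Fin dB' × Fin dB) ℂ)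
    (ρ : BMat dA' dB'),
    IsPOVM Ma ∧ IsPOVM Mb ∧ IsDensity ρ ∧ SepState ρ ∧
    ∀ a b, M a b = distMeas (Ma a) (Mb b) ρ

/-- Robustness of Buscemi nonlocality. -/
def RoBN {dA dB oA oB : ℕ} (M : Fin oA → Fin oB → BMat dA dB) : ℝ :=
  sInf { r : ℝ | 0 ≤ r ∧ ∃ (N O : Fin oA → Fin oB → BMat dA dB),
    MemRBN N ∧ MemFBN O ∧
    ∀ a b, M a b + (r : ℂ) • N a b = ((1 + r : ℝ) : ℂ) • O a b }

/-- Quantum simulation of a distributed measurement: shared randomness, local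
pre-processing channels (given by Kraus operators) in the Heisenberg picture,
and classical post-processing of outcomes. -/
def Simulates {dA dB oA oB oA' oB' : ℕ}
    (M : Fin oA → Fin oB → BMat dA dB)
    (M' : Fin oA' → Fin oB' → BMat dA dB) : Prop :=
  ∃ (nL : ℕ) (pL : Fin nL → ℝ)
    (pA : Fin oA' → Fin oA → Fin nL → ℝ)
    (pB : Fin oB' → Fin oB → Fin nL → ℝ)
    (kE : Fin nL → ℕ) (KE : (l : Fin nL) → Fin (kE l) → Mat dA)
    (kN : Fin nL → ℕ) (KN : (l : Fin nL) → Fin (kN l) → Mat dB),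
    (∀ l, 0 ≤ pL l) ∧ (∑ l, pL l = 1) ∧
    (∀ a i l, 0 ≤ pA a i l) ∧ (∀ i l, ∑ a, pA a i l = 1) ∧
    (∀ b j l, 0 ≤ pB b j l) ∧ (∀ j l, ∑ b, pB b j l = 1) ∧
    (∀ l, ∑ s : Fin (kE l), (KE l s)ᴴ * KE l s = 1) ∧
    (∀ l, ∑ t : Fin (kN l), (KN l t)ᴴ * KN l t = 1) ∧
    ∀ a b, M' a b = ∑ l : Fin nL, ∑ i : Fin oA, ∑ j : Fin oB,
      ((pL l * pA a i l * pB b j l : ℝ) : ℂ) •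
        ∑ s : Fin (kE l), ∑ t : Fin (kN l),
          (KE l s ⊗ₖ KN l t)ᴴ * M i j * (KE l s ⊗ₖ KN l t)

/-- An ensemble of bipartite states: a probability distribution together with
density matrices. -/
def IsEnsemble {dA dB oA oB : ℕ} (p : Fin oA → Fin oB → ℝ)
    (σ : Fin oA → Fin oB → BMat dA dB) : Prop :=
  (∀ x y, 0 ≤ p x y) ∧ (∑ x, ∑ y, p x y = 1) ∧ ∀ x y, IsDensity (σ x y)

/-- Guessing probability in distributed state discrimination with a distributed
measurement `M`. -/
def pDSD {dA dB oA oB : ℕ} (p : Fin oA → Fin oB → ℝ)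
    (σ : Fin oA → Fin oB → BMat dA dB)
    (M : Fin oA → Fin oB → BMat dA dB) : ℝ :=
  sSup { v : ℝ | ∃ N : Fin oA → Fin oB → BMat dA dB, Simulates M N ∧
    v = ∑ x : Fin oA, ∑ y : Fin oB, p x y * ((N x y * σ x y).trace).re }

/-- Classical value of distributed state discrimination. -/
def pDSDc {dA dB oA oB : ℕ} (p : Fin oA → Fin oB → ℝ)
    (σ : Fin oA → Fin oB → BMat dA dB) : ℝ :=
  sSup { v : ℝ | ∃ N : Fin oA → Fin oB → BMat dA dB, MemFBN N ∧ v = pDSD p σ N }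

/-- The subchannel `ω ↦ tr_{AA'}[(Ma ⊗ 1^{B'})(ω ⊗ ρ^{A'B'})]` of a teleportation
instrument (written out entrywise). -/
def telep {dA dA' dB' : ℕ}
    (Ma : Matrix (Fin dA × Fin dA') (Fin dA × Fin dA') ℂ)
    (ρ : BMat dA' dB') (ω : Mat dA) : Mat dB' :=
  Matrix.of fun l l' =>
    ∑ i : Fin dA, ∑ k : Fin dA', ∑ i' : Fin dA, ∑ k' : Fin dA',
      Ma (i, k) (i', k') * ω i' i * ρ (k', l) (k, l')

/-- Membership in `R_T`: the instrument is a teleportation instrument. -/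
def MemRT {dA dB' oA : ℕ} (Λ : Fin oA → Mat dA → Mat dB') : Prop :=
  ∃ (dA' : ℕ) (Ma : Fin oA → Matrix (Fin dA × Fin dA') (Fin dA × Fin dA') ℂ)
    (ρ : BMat dA' dB'),
    IsPOVM Ma ∧ IsDensity ρ ∧ ∀ a ω, Λ a ω = telep (Ma a) ρ ω

/-- Membership in `F_T`: a teleportation instrument realizable with a separable state. -/
def MemFT {dA dB' oA : ℕ} (Λ : Fin oA → Mat dA → Mat dB') : Prop :=
  ∃ (dA' : ℕ) (Ma : Fin oA → Matrix (Fin dA × Fin dA') (Fin dA × Fin dA') ℂ)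
    (ρ : BMat dA' dB'),
    IsPOVM Ma ∧ IsDensity ρ ∧ SepState ρ ∧ ∀ a ω, Λ a ω = telep (Ma a) ρ ω

/-- Robustness of teleportation. -/
def RoT {dA dB' oA : ℕ} (Λ : Fin oA → Mat dA → Mat dB') : ℝ :=
  sInf { r : ℝ | 0 ≤ r ∧ ∃ (Ω Γ : Fin oA → Mat dA → Mat dB'),
    MemRT Ω ∧ MemFT Γ ∧
    ∀ a ω, Λ a ω + (r : ℂ) • Ω a ω = ((1 + r : ℝ) : ℂ) • Γ a ω }

/-- Quantum simulation of a teleportation instrument: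
`Φ_a = Σ_{i,λ} p(λ) p(a|i,λ) E_λ ∘ Λ_i ∘ N_λ` with channels given by Kraus operators. -/
def SimInstr {dA dB' o o' : ℕ} (Λ : Fin o → Mat dA → Mat dB')
    (Φ : Fin o' → Mat dA → Mat dB') : Prop :=
  ∃ (nL : ℕ) (pL : Fin nL → ℝ) (pA : Fin o' → Fin o → Fin nL → ℝ)
    (kN : Fin nL → ℕ) (KN : (l : Fin nL) → Fin (kN l) → Mat dA)
    (kE : Fin nL → ℕ) (KE : (l : Fin nL) → Fin (kE l) → Mat dB'),
    (∀ l, 0 ≤ pL l) ∧ (∑ l, pL l = 1) ∧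
    (∀ a i l, 0 ≤ pA a i l) ∧ (∀ i l, ∑ a, pA a i l = 1) ∧
    (∀ l, ∑ s : Fin (kN l), (KN l s)ᴴ * KN l s = 1) ∧
    (∀ l, ∑ t : Fin (kE l), (KE l t)ᴴ * KE l t = 1) ∧
    ∀ a ω, Φ a ω = ∑ l : Fin nL, ∑ i : Fin o,
      ((pL l * pA a i l : ℝ) : ℂ) •
        ∑ t : Fin (kE l),
          KE l t * Λ i (∑ s : Fin (kN l), KN l s * ω * (KN l s)ᴴ) * (KE l t)ᴴ

/-- `(Φ ⊗ id^B)[σ]` for a map `Φ` acting on the first tensor factor. -/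
def appFst {dA dB' dB : ℕ} (Φ : Mat dA → Mat dB') (σ : BMat dA dB) : BMat dB' dB :=
  Matrix.of fun pq rs =>
    Φ (Matrix.of fun i i' => σ (i, pq.2) (i', rs.2)) pq.1 rs.1

/-- Guessing probability in teleportation-assisted state discrimination with
instrument `Λ`. -/
def pTSD {dA dB' o dB oA oB : ℕ} (p : Fin oA → Fin oB → ℝ)
    (σ : Fin oA → Fin oB → BMat dA dB)
    (Λ : Fin o → Mat dA → Mat dB') : ℝ :=
  sSup { v : ℝ | ∃ (Mb : Fin oB → Matrix (Fin dB' × Fin dB) (Fin dB' × Fin dB) ℂ)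
      (Φ : Fin oA → Mat dA → Mat dB'),
    IsPOVM Mb ∧ SimInstr Λ Φ ∧
    v = ∑ x : Fin oA, ∑ y : Fin oB,
      p x y * ((Mb y * appFst (Φ x) (σ x y)).trace).re }

/-- Classical value of teleportation-assisted state discrimination. -/
def pTSDc (dB' : ℕ) {dA dB oA oB : ℕ} (p : Fin oA → Fin oB → ℝ)
    (σ : Fin oA → Fin oB → BMat dA dB) : ℝ :=
  sSup { v : ℝ | ∃ (o' : ℕ) (F : Fin o' → Mat dA → Mat dB'),
    MemFT F ∧ v = pTSD p σ F }

/-- Generalized robustness of entanglement. -/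
def RoE {dA dB : ℕ} (ρ : BMat dA dB) : ℝ :=
  sInf { r : ℝ | 0 ≤ r ∧ ∃ (η σ : BMat dA dB),
    IsDensity η ∧ IsDensity σ ∧ SepState σ ∧
    ρ + (r : ℂ) • η = ((1 + r : ℝ) : ℂ) • σ }

/-- Guessing probability in entanglement-assisted state discrimination with
shared state `ρ`. -/
def pESD {dA dB oA oB dA' dB' : ℕ} (p : Fin oA → Fin oB → ℝ)
    (σ : Fin oA → Fin oB → BMat dA dB) (ρ : BMat dA' dB') : ℝ :=
  sSup { v : ℝ | ∃ (Ma : Fin oA → Matrix (Fin dA × Fin dA') (Fin dA × Fin dA') ℂ)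
      (Mb : Fin oB → Matrix (Fin dB' × Fin dB) (Fin dB' × Fin dB) ℂ),
    IsPOVM Ma ∧ IsPOVM Mb ∧
    v = ∑ x : Fin oA, ∑ y : Fin oB,
      p x y * ((distMeas (Ma x) (Mb y) ρ * σ x y).trace).re }

/-- Classical value of entanglement-assisted state discrimination. -/
def pESDc {dA dB oA oB : ℕ} (p : Fin oA → Fin oB → ℝ)
    (σ : Fin oA → Fin oB → BMat dA dB) : ℝ :=
  sSup { v : ℝ | ∃ (dA' dB' : ℕ) (ρ : BMat dA' dB'),
    IsDensity ρ ∧ SepState ρ ∧ v = pESD p σ ρ }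

/-- Partial trace over the second tensor factor. -/
def ptraceSnd {m n : Type} [Fintype n] (M : Matrix (m × n) (m × n) ℂ) : Matrix m m ℂ :=
  Matrix.of fun i j => ∑ k : n, M (i, k) (j, k)

/-- Partial trace over the first tensor factor. -/
def ptraceFst {m n : Type} [Fintype m] (M : Matrix (m × n) (m × n) ℂ) : Matrix n n ℂ :=
  Matrix.of fun i j => ∑ k : m, M (k, i) (k, j)

/-- Average score in a general no-signalling game with scoring function `V`. -/
def pV {dA dB oA oB nX nY : ℕ} (p : Fin nX → Fin nY → ℝ)
    (σ : Fin nX → Fin nY → BMat dA dB)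
    (V : Fin oA → Fin oB → Fin nX → Fin nY → ℝ)
    (M : Fin oA → Fin oB → BMat dA dB) : ℝ :=
  ∑ a : Fin oA, ∑ b : Fin oB, ∑ x : Fin nX, ∑ y : Fin nY,
    p x y * ((M a b * σ x y).trace).re * V a b x y

/-- Min-accessible information of a channel, with base-2 logarithms. -/
def IaccMin {dA dB : ℕ} {out : Type} [Fintype out] [DecidableEq out]
    (N : BMat dA dB → Matrix out out ℂ) : ℝ :=
  sSup { v : ℝ | ∃ (n m : ℕ) (p : Fin n → ℝ) (σ : Fin n → BMat dA dB)
      (D : Fin m → Matrix out out ℂ),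
    (∀ x, 0 ≤ p x) ∧ (∑ x, p x = 1) ∧ (∀ x, IsDensity (σ x)) ∧ IsPOVM D ∧
    v = Real.logb 2 (∑ g : Fin m, ⨆ x : Fin n, p x * ((N (σ x) * D g).trace).re)
      - Real.logb 2 (⨆ x : Fin n, p x) }

/-!
If `M + r N = (1 + r) O` with `N ∈ R_BN` and `O ∈ F_BN`, apply any quantum simulation to this
identity: simulations act linearly and positively, so the simulated measurement of `M` is
dominated by `(1 + r)` times the same simulation of the free measurement `O`. Hence every score
reachable from `M` is at most `(1 + r)` times a score reachable from `O ∈ F_BN`, that is at most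
`(1 + r) p_DSD(G)`, and one takes the infimum over `r`. Such `r` exist because the shared state of
`M` mixes with noise into the maximally mixed state, which is separable.
-/

open scoped MatrixOrder

namespace Matrix

variable {n : Type} [Fintype n] [DecidableEq n]

lemma PosSemidef.exists_eq_conjTranspose_mul_self {A : Matrix n n ℂ} (hA : A.PosSemidef) :
    ∃ C : Matrix n n ℂ, A = Cᴴ * C :=
  CStarAlgebra.nonneg_iff_eq_star_mul_self.mp hA.nonneg

lemma PosSemidef.re_trace_mul_nonneg {A B : Matrix n n ℂ} (hA : A.PosSemidef)
    (hB : B.PosSemidef) : 0 ≤ ((A * B).trace).re := by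
  obtain ⟨C, rfl⟩ := hA.exists_eq_conjTranspose_mul_self
  rw [Matrix.mul_assoc, trace_mul_comm]
  exact (Complex.nonneg_iff.mp (hB.mul_mul_conjTranspose_same C).trace_nonneg).1

lemma PosSemidef.one_sub_of_trace_eq_one {ρ : Matrix n n ℂ} (hρ : ρ.PosSemidef)
    (htr : ρ.trace = 1) : (1 - ρ).PosSemidef := by
  have hsum : ∑ j, hρ.1.eigenvalues j = 1 := by
    apply Complex.ofReal_injective
    simpa [htr] using hρ.1.trace_eq_sum_eigenvalues.symm
  have hle : ρ ≤ algebraMap ℝ (Matrix n n ℂ) 1 := by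
    refine le_algebraMap_of_spectrum_le (fun x hx => ?_) hρ.1.isSelfAdjoint
    obtain ⟨i, rfl⟩ := hρ.1.spectrum_real_eq_range_eigenvalues ▸ hx
    exact hsum ▸ Finset.single_le_sum (fun j _ => hρ.eigenvalues_nonneg j) (Finset.mem_univ i)
  simpa [le_iff] using hle

end Matrix

section PartialTrace

variable {m n : Type} [Fintype n]

lemma ptraceSnd_posSemidef {X : Matrix (m × n) (m × n) ℂ} (hX : X.PosSemidef) :
    (ptraceSnd X).PosSemidef := by
  have hsum : ptraceSnd X = ∑ k, X.submatrix (·, k) (·, k) := by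
    ext i j; simp [ptraceSnd, Matrix.sum_apply]
  exact hsum ▸ Matrix.posSemidef_sum _ fun k _ => hX.submatrix _

lemma ptraceSnd_kronecker (A : Matrix m m ℂ) (B : Matrix n n ℂ) :
    ptraceSnd (A ⊗ₖ B) = B.trace • A := by
  ext i j; simp [ptraceSnd, Matrix.trace, Finset.mul_sum, mul_comm]

lemma ptraceSnd_mul_one_kronecker_comm [Fintype m] [DecidableEq m] [DecidableEq n]
    (X : Matrix (m × n) (m × n) ℂ) (Y : Matrix n n ℂ) :
    ptraceSnd (X * (1 ⊗ₖ Y)) = ptraceSnd ((1 ⊗ₖ Y) * X) := by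
  ext i j
  simp only [ptraceSnd, of_apply, mul_apply, kroneckerMap_apply, one_apply, ite_mul, mul_ite,
    one_mul, zero_mul, mul_zero, Fintype.sum_prod_type, Finset.sum_ite_irrel,
    Finset.sum_const_zero, Finset.sum_ite_eq, Finset.sum_ite_eq', Finset.mem_univ, ↓reduceIte]
  rw [Finset.sum_comm]
  simp only [mul_comm]

lemma ptraceSnd_mul_one_kronecker_posSemidef [Fintype m] [DecidableEq m] [DecidableEq n]
    {X : Matrix (m × n) (m × n) ℂ} {Y : Matrix n n ℂ} (hX : X.PosSemidef) (hY : Y.PosSemidef) :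
    (ptraceSnd (X * (1 ⊗ₖ Y))).PosSemidef := by
  obtain ⟨C, rfl⟩ := hY.exists_eq_conjTranspose_mul_self
  have hconj : (1 : Matrix m m ℂ) ⊗ₖ (Cᴴ * C) = (1 ⊗ₖ C)ᴴ * (1 ⊗ₖ C) := by
    simp [conjTranspose_kronecker, ← mul_kronecker_mul]
  -- cyclicity on the traced factor turns `X (1 ⊗ Cᴴ C)` into a congruence of `X` by `1 ⊗ C`
  rw [hconj, ← Matrix.mul_assoc, ptraceSnd_mul_one_kronecker_comm, ← Matrix.mul_assoc]
  exact ptraceSnd_posSemidef (hX.mul_mul_conjTranspose_same _)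

end PartialTrace

section DistributedMeasurement

variable {dA dA' dB' dB : ℕ}

lemma distMeas_eq_ptraceSnd (Ma : Matrix (Fin dA × Fin dA') (Fin dA × Fin dA') ℂ)
    (Mb : Matrix (Fin dB' × Fin dB) (Fin dB' × Fin dB) ℂ) (ρ : BMat dA' dB') :
    distMeas Ma Mb ρ = ptraceSnd
      -- reorder the factors `(A A') (B' B)` of `Ma ⊗ Mb` as `(A B) (A' B')`
      ((Ma ⊗ₖ Mb).submatrix (fun x => ((x.1.1, x.2.1), (x.2.2, x.1.2)))
        (fun x => ((x.1.1, x.2.1), (x.2.2, x.1.2))) * (1 ⊗ₖ ρ)) := by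
  ext
  simp [distMeas, ptraceSnd, mul_apply, one_apply, Fintype.sum_prod_type, ite_mul]

lemma distMeas_posSemidef {Ma : Matrix (Fin dA × Fin dA') (Fin dA × Fin dA') ℂ}
    {Mb : Matrix (Fin dB' × Fin dB) (Fin dB' × Fin dB) ℂ} {ρ : BMat dA' dB'}
    (hMa : Ma.PosSemidef) (hMb : Mb.PosSemidef) (hρ : ρ.PosSemidef) :
    (distMeas Ma Mb ρ).PosSemidef := by
  rw [distMeas_eq_ptraceSnd]
  exact ptraceSnd_mul_one_kronecker_posSemidef ((hMa.kronecker hMb).submatrix _) hρ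

lemma distMeas_one_one (ρ : BMat dA' dB') :
    distMeas (1 : Matrix (Fin dA × Fin dA') _ _) (1 : Matrix (Fin dB' × Fin dB) _ _) ρ
      = ρ.trace • 1 := by
  rw [distMeas_eq_ptraceSnd, one_kronecker_one, submatrix_one _ (fun x y h => by aesop),
    Matrix.one_mul, ptraceSnd_kronecker]

lemma distMeas_add_left (Ma Ma' : Matrix (Fin dA × Fin dA') (Fin dA × Fin dA') ℂ)
    (Mb : Matrix (Fin dB' × Fin dB) (Fin dB' × Fin dB) ℂ) (ρ : BMat dA' dB') :
    distMeas (Ma + Ma') Mb ρ = distMeas Ma Mb ρ + distMeas Ma' Mb ρ := by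
  ext; simp [distMeas, add_mul, Finset.sum_add_distrib]

lemma distMeas_add_right (Ma : Matrix (Fin dA × Fin dA') (Fin dA × Fin dA') ℂ)
    (Mb Mb' : Matrix (Fin dB' × Fin dB) (Fin dB' × Fin dB) ℂ) (ρ : BMat dA' dB') :
    distMeas Ma (Mb + Mb') ρ = distMeas Ma Mb ρ + distMeas Ma Mb' ρ := by
  ext; simp [distMeas, add_mul, mul_add, Finset.sum_add_distrib]

lemma distMeas_add_state (Ma : Matrix (Fin dA × Fin dA') (Fin dA × Fin dA') ℂ)
    (Mb : Matrix (Fin dB' × Fin dB) (Fin dB' × Fin dB) ℂ) (ρ η : BMat dA' dB') :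
    distMeas Ma Mb (ρ + η) = distMeas Ma Mb ρ + distMeas Ma Mb η := by
  ext; simp [distMeas, mul_add, Finset.sum_add_distrib]

lemma distMeas_smul_state (Ma : Matrix (Fin dA × Fin dA') (Fin dA × Fin dA') ℂ)
    (Mb : Matrix (Fin dB' × Fin dB) (Fin dB' × Fin dB) ℂ) (c : ℂ) (ρ : BMat dA' dB') :
    distMeas Ma Mb (c • ρ) = c • distMeas Ma Mb ρ := by
  ext; simp [distMeas, Finset.mul_sum, mul_left_comm]

lemma distMeas_sum_sum {oA oB : ℕ}
    (Ma : Fin oA → Matrix (Fin dA × Fin dA') (Fin dA × Fin dA') ℂ)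
    (Mb : Fin oB → Matrix (Fin dB' × Fin dB) (Fin dB' × Fin dB) ℂ) (ρ : BMat dA' dB') :
    ∑ a, ∑ b, distMeas (Ma a) (Mb b) ρ = distMeas (∑ a, Ma a) (∑ b, Mb b) ρ := by
  have hA := map_sum (AddMonoidHom.mk' (distMeas · (∑ b, Mb b) ρ) fun _ _ =>
    distMeas_add_left _ _ _ _) Ma Finset.univ
  have hB a := map_sum (AddMonoidHom.mk' (distMeas (Ma a) · ρ) fun _ _ =>
    distMeas_add_right _ _ _ _) Mb Finset.univ
  simp only [AddMonoidHom.mk'_apply] at hA hB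
  simp only [hA, hB]

end DistributedMeasurement

section Membership

variable {dA dB oA oB : ℕ}

lemma MemRBN.posSemidef {M : Fin oA → Fin oB → BMat dA dB} (hM : MemRBN M) (a : Fin oA)
    (b : Fin oB) : (M a b).PosSemidef := by
  obtain ⟨dA', dB', Ma, Mb, ρ, hMa, hMb, hρ, hrep⟩ := hM
  exact hrep a b ▸ distMeas_posSemidef (hMa.1 a) (hMb.1 b) hρ.1

lemma MemFBN.memRBN {M : Fin oA → Fin oB → BMat dA dB} (hM : MemFBN M) : MemRBN M :=
  let ⟨dA', dB', Ma, Mb, ρ, hMa, hMb, hρ, _, hrep⟩ := hM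
  ⟨dA', dB', Ma, Mb, ρ, hMa, hMb, hρ, hrep⟩

lemma MemRBN.isPOVM {M : Fin oA → Fin oB → BMat dA dB} (hM : MemRBN M) :
    IsPOVM (Function.uncurry M) := by
  refine ⟨fun q => hM.posSemidef q.1 q.2, ?_⟩
  obtain ⟨dA', dB', Ma, Mb, ρ, hMa, hMb, hρ, hrep⟩ := hM
  simp only [Fintype.sum_prod_type, Function.uncurry_apply_pair, hrep]
  rw [distMeas_sum_sum, hMa.2, hMb.2, distMeas_one_one, hρ.2, one_smul]

end Membership

section Robustness

lemma isDensity_inv_card_smul_one {ι : Type} [Fintype ι] [DecidableEq ι] [Nonempty ι] :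
    IsDensity (((Fintype.card ι : ℝ)⁻¹ : ℝ) • (1 : Matrix ι ι ℂ)) := by
  refine ⟨PosSemidef.one.smul (by positivity), ?_⟩
  rw [trace_smul, trace_one]
  simp

lemma sepState_inv_card_smul_one {dA dB : ℕ} [Nonempty (Fin dA)] [Nonempty (Fin dB)] :
    SepState (((Fintype.card (Fin dA × Fin dB) : ℝ)⁻¹ : ℝ) • (1 : BMat dA dB)) := by
  refine ⟨1, fun _ => 1, fun _ => ((Fintype.card (Fin dA) : ℝ)⁻¹ : ℝ) • 1,
    fun _ => ((Fintype.card (Fin dB) : ℝ)⁻¹ : ℝ) • 1, fun _ => zero_le_one, by simp,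
    fun _ => isDensity_inv_card_smul_one, fun _ => isDensity_inv_card_smul_one, ?_⟩
  simp [smul_kronecker, kronecker_smul, smul_smul, mul_comm]

lemma IsDensity.exists_separable_robustness_decomposition {dA dB : ℕ} {ρ : BMat dA dB}
    (hρ : IsDensity ρ) : ∃ r : ℝ, 0 ≤ r ∧ ∃ η σ : BMat dA dB, IsDensity η ∧ IsDensity σ ∧
      SepState σ ∧ ρ + (r : ℂ) • η = ((1 + r : ℝ) : ℂ) • σ := by
  obtain ⟨a, b⟩ : Nonempty (Fin dA × Fin dB) := by
    by_contra h
    rw [not_nonempty_iff] at h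
    simpa [trace] using hρ.2
  have : Nonempty (Fin dA) := ⟨a⟩
  have : Nonempty (Fin dB) := ⟨b⟩
  set D : ℝ := (Fintype.card (Fin dA × Fin dB) : ℝ)
  have hD : 0 < D := by positivity
  -- `ρ ≤ 1` because `tr ρ = 1`, so `ρ + D η = (1 + 1/D) 1` with `η = (1 - ρ + 1/D) / D`
  refine ⟨D, hD.le, D⁻¹ • ((1 - ρ) + D⁻¹ • 1), D⁻¹ • 1, ⟨?_, ?_⟩,
    isDensity_inv_card_smul_one, sepState_inv_card_smul_one, ?_⟩
  · exact ((hρ.1.one_sub_of_trace_eq_one hρ.2).add (PosSemidef.one.smul (by positivity))).smul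
      (by positivity)
  · have hcard : ((Fintype.card (Fin dA × Fin dB) : ℕ) : ℂ) = (D : ℂ) := by simp [D]
    have hD' : (D : ℂ) ≠ 0 := by exact_mod_cast hD.ne'
    rw [trace_smul, trace_add, trace_sub, trace_smul, trace_one, hρ.2, Complex.real_smul,
      Complex.real_smul, hcard]
    push_cast
    field_simp
    ring
  · rw [Complex.coe_smul, Complex.coe_smul, smul_smul, mul_inv_cancel₀ hD.ne', one_smul,
      smul_smul, add_mul, one_mul, mul_inv_cancel₀ hD.ne']
    module

def RoBNFeasible {dA dB oA oB : ℕ} (M : Fin oA → Fin oB → BMat dA dB) (r : ℝ) : Prop :=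
  0 ≤ r ∧ ∃ (N O : Fin oA → Fin oB → BMat dA dB), MemRBN N ∧ MemFBN O ∧
    ∀ a b, M a b + (r : ℂ) • N a b = ((1 + r : ℝ) : ℂ) • O a b

lemma MemRBN.exists_roBNFeasible {dA dB oA oB : ℕ} {M : Fin oA → Fin oB → BMat dA dB}
    (hM : MemRBN M) : ∃ r, RoBNFeasible M r := by
  obtain ⟨dA', dB', Ma, Mb, ρ, hMa, hMb, hρ, hrep⟩ := hM
  obtain ⟨r, hr, η, σ, hη, hσ, hσsep, hdec⟩ := hρ.exists_separable_robustness_decomposition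
  exact ⟨r, hr, _, _, ⟨dA', dB', Ma, Mb, η, hMa, hMb, hη, fun _ _ => rfl⟩,
    ⟨dA', dB', Ma, Mb, σ, hMa, hMb, hσ, hσsep, fun _ _ => rfl⟩, fun a b => by
      rw [hrep, ← distMeas_smul_state, ← distMeas_add_state, hdec, distMeas_smul_state]⟩

end Robustness

structure QuantumSimulation (dA dB oA oB oA' oB' : ℕ) where
  nL : ℕ
  pL : Fin nL → ℝ
  pA : Fin oA' → Fin oA → Fin nL → ℝ
  pB : Fin oB' → Fin oB → Fin nL → ℝ
  kE : Fin nL → ℕ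
  KE : (l : Fin nL) → Fin (kE l) → Mat dA
  kN : Fin nL → ℕ
  KN : (l : Fin nL) → Fin (kN l) → Mat dB
  pL_nonneg : ∀ l, 0 ≤ pL l
  sum_pL : ∑ l, pL l = 1
  pA_nonneg : ∀ a i l, 0 ≤ pA a i l
  sum_pA : ∀ i l, ∑ a, pA a i l = 1
  pB_nonneg : ∀ b j l, 0 ≤ pB b j l
  sum_pB : ∀ j l, ∑ b, pB b j l = 1
  sum_KE : ∀ l, ∑ s : Fin (kE l), (KE l s)ᴴ * KE l s = 1
  sum_KN : ∀ l, ∑ t : Fin (kN l), (KN l t)ᴴ * KN l t = 1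

namespace QuantumSimulation

variable {dA dB oA oB oA' oB' : ℕ} (S : QuantumSimulation dA dB oA oB oA' oB')

/-- The map `E_λ† ⊗ N_λ†` of the paper. -/
def localAdjoint (l : Fin S.nL) : BMat dA dB →ₗ[ℂ] BMat dA dB where
  toFun X := ∑ s, ∑ t, (S.KE l s ⊗ₖ S.KN l t)ᴴ * X * (S.KE l s ⊗ₖ S.KN l t)
  map_add' X Y := by simp [Matrix.mul_add, Matrix.add_mul, Finset.sum_add_distrib]
  map_smul' c X := by simp [Finset.smul_sum]

lemma localAdjoint_posSemidef (l : Fin S.nL) {X : BMat dA dB} (hX : X.PosSemidef) :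
    (S.localAdjoint l X).PosSemidef :=
  posSemidef_sum _ fun _ _ => posSemidef_sum _ fun _ _ => hX.conjTranspose_mul_mul_same _

lemma localAdjoint_one (l : Fin S.nL) : S.localAdjoint l 1 = 1 := by
  have hsum : ∑ s, ∑ t, ((S.KE l s)ᴴ * S.KE l s) ⊗ₖ ((S.KN l t)ᴴ * S.KN l t)
      = (∑ s, (S.KE l s)ᴴ * S.KE l s) ⊗ₖ (∑ t, (S.KN l t)ᴴ * S.KN l t) := by
    ext; simp [Matrix.sum_apply, kroneckerMap_apply, Finset.sum_mul_sum]
  simpa [localAdjoint, conjTranspose_kronecker, ← mul_kronecker_mul, S.sum_KE, S.sum_KN]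
    using hsum

def apply : (Fin oA → Fin oB → BMat dA dB) →ₗ[ℂ] (Fin oA' → Fin oB' → BMat dA dB) where
  toFun M a b := ∑ l, ∑ i, ∑ j,
    ((S.pL l * S.pA a i l * S.pB b j l : ℝ) : ℂ) • S.localAdjoint l (M i j)
  map_add' M N := by ext a b : 2; simp [smul_add, Finset.sum_add_distrib]
  map_smul' c M := by ext a b : 2; simp [Finset.smul_sum, smul_comm c]

lemma apply_posSemidef {M : Fin oA → Fin oB → BMat dA dB} (hM : ∀ i j, (M i j).PosSemidef)
    (a : Fin oA') (b : Fin oB') : (S.apply M a b).PosSemidef := by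
  refine posSemidef_sum _ fun l _ => posSemidef_sum _ fun i _ => posSemidef_sum _ fun j _ => ?_
  have := S.pL_nonneg l; have := S.pA_nonneg a i l; have := S.pB_nonneg b j l
  exact (S.localAdjoint_posSemidef l (hM i j)).smul (Complex.zero_le_real.mpr (by positivity))

lemma isPOVM_apply {M : Fin oA → Fin oB → BMat dA dB} (hM : IsPOVM (Function.uncurry M)) :
    IsPOVM (Function.uncurry (S.apply M)) := by
  refine ⟨fun q => S.apply_posSemidef (fun i j => hM.1 (i, j)) q.1 q.2, ?_⟩
  have hsum : ∑ i, ∑ j, M i j = 1 := by simpa [Fintype.sum_prod_type] using hM.2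
  have hweights l i j : ∑ a, ∑ b, S.pL l * S.pA a i l * S.pB b j l = S.pL l := by
    simp [← Finset.mul_sum, S.sum_pA, S.sum_pB]
  simp only [Fintype.sum_prod_type, Function.uncurry_apply_pair, apply, LinearMap.coe_mk,
    AddHom.coe_mk]
  -- move the outcome sums over `a` and `b` innermost
  simp only [Finset.sum_comm (t := (Finset.univ : Finset (Fin oB)))]
  simp only [Finset.sum_comm (t := (Finset.univ : Finset (Fin oA)))]
  simp only [Finset.sum_comm (t := (Finset.univ : Finset (Fin S.nL)))]
  simp only [← Finset.sum_smul, ← Complex.ofReal_sum, hweights]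
  simp only [Complex.coe_smul, ← Finset.smul_sum, ← map_sum, hsum, localAdjoint_one,
    ← Finset.sum_smul, S.sum_pL, one_smul]

end QuantumSimulation

section Simulation

variable {dA dB oA oB oA' oB' : ℕ} {M : Fin oA → Fin oB → BMat dA dB}
  {N : Fin oA' → Fin oB' → BMat dA dB}

lemma simulates_iff :
    Simulates M N ↔ ∃ S : QuantumSimulation dA dB oA oB oA' oB', N = S.apply M := by
  constructor
  · rintro ⟨nL, pL, pA, pB, kE, KE, kN, KN, h1, h2, h3, h4, h5, h6, h7, h8, hN⟩
    exact ⟨⟨nL, pL, pA, pB, kE, KE, kN, KN, h1, h2, h3, h4, h5, h6, h7, h8⟩, funext₂ hN⟩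
  · rintro ⟨S, rfl⟩
    exact ⟨S.nL, S.pL, S.pA, S.pB, S.kE, S.KE, S.kN, S.KN, S.pL_nonneg, S.sum_pL, S.pA_nonneg,
      S.sum_pA, S.pB_nonneg, S.sum_pB, S.sum_KE, S.sum_KN, fun _ _ => rfl⟩

lemma Simulates.posSemidef (h : Simulates M N) (hM : ∀ i j, (M i j).PosSemidef) (a : Fin oA')
    (b : Fin oB') : (N a b).PosSemidef := by
  obtain ⟨S, rfl⟩ := simulates_iff.1 h
  exact S.apply_posSemidef hM a b

lemma Simulates.isPOVM (h : Simulates M N) (hM : IsPOVM (Function.uncurry M)) :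
    IsPOVM (Function.uncurry N) := by
  obtain ⟨S, rfl⟩ := simulates_iff.1 h
  exact S.isPOVM_apply hM

end Simulation

def dsdValue {dA dB oA oB : ℕ} (p : Fin oA → Fin oB → ℝ) (σ : Fin oA → Fin oB → BMat dA dB)
    (N : Fin oA → Fin oB → BMat dA dB) : ℝ :=
  ∑ x, ∑ y, p x y * ((N x y * σ x y).trace).re

section GuessingProbability

variable {dA dB oA oB : ℕ} {p : Fin oA → Fin oB → ℝ} {σ : Fin oA → Fin oB → BMat dA dB}
  {M N : Fin oA → Fin oB → BMat dA dB}

lemma dsdValue_add (N N' : Fin oA → Fin oB → BMat dA dB) :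
    dsdValue p σ (N + N') = dsdValue p σ N + dsdValue p σ N' := by
  simp [dsdValue, Matrix.add_mul, mul_add, Finset.sum_add_distrib]

lemma dsdValue_ofReal_smul (c : ℝ) (N : Fin oA → Fin oB → BMat dA dB) :
    dsdValue p σ ((c : ℂ) • N) = c * dsdValue p σ N := by
  simp [dsdValue, Finset.mul_sum, mul_left_comm]

lemma dsdValue_nonneg (hG : IsEnsemble p σ) (hN : ∀ a b, (N a b).PosSemidef) :
    0 ≤ dsdValue p σ N :=
  Finset.sum_nonneg fun x _ => Finset.sum_nonneg fun y _ =>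
    mul_nonneg (hG.1 x y) ((hN x y).re_trace_mul_nonneg (hG.2.2 x y).1)

lemma dsdValue_le_one (hG : IsEnsemble p σ) (hN : IsPOVM (Function.uncurry N)) :
    dsdValue p σ N ≤ 1 := by
  have hle x y : ((N x y * σ x y).trace).re ≤ 1 := by
    have hN1 : N x y ≤ 1 := hN.2 ▸ Finset.single_le_sum (f := Function.uncurry N)
      (fun q _ => (hN.1 q).nonneg) (Finset.mem_univ (x, y))
    have hrest := (le_iff.mp hN1).re_trace_mul_nonneg (hG.2.2 x y).1
    rw [Matrix.sub_mul, trace_sub, Complex.sub_re, Matrix.one_mul, (hG.2.2 x y).2,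
      Complex.one_re] at hrest
    linarith
  calc dsdValue p σ N ≤ ∑ x, ∑ y, p x y := Finset.sum_le_sum fun x _ =>
        Finset.sum_le_sum fun y _ => mul_le_of_le_one_right (hG.1 x y) (hle x y)
    _ = 1 := hG.2.1

lemma pDSD_nonneg (hG : IsEnsemble p σ) (hM : ∀ a b, (M a b).PosSemidef) : 0 ≤ pDSD p σ M :=
  Real.sSup_nonneg (by rintro _ ⟨N, hN, rfl⟩; exact dsdValue_nonneg hG (hN.posSemidef hM))

lemma dsdValue_le_pDSD (hG : IsEnsemble p σ) (hM : IsPOVM (Function.uncurry M))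
    (hMN : Simulates M N) : dsdValue p σ N ≤ pDSD p σ M :=
  le_csSup ⟨1, by rintro _ ⟨N', hN', rfl⟩; exact dsdValue_le_one hG (hN'.isPOVM hM)⟩ ⟨N, hMN, rfl⟩

lemma pDSD_le_one (hG : IsEnsemble p σ) (hM : IsPOVM (Function.uncurry M)) : pDSD p σ M ≤ 1 :=
  Real.sSup_le (by rintro _ ⟨N, hN, rfl⟩; exact dsdValue_le_one hG (hN.isPOVM hM)) zero_le_one

lemma pDSDc_nonneg (hG : IsEnsemble p σ) : 0 ≤ pDSDc p σ :=
  Real.sSup_nonneg (by rintro _ ⟨N, hN, rfl⟩; exact pDSD_nonneg hG hN.memRBN.posSemidef)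

lemma pDSD_le_pDSDc (hG : IsEnsemble p σ) (hM : MemFBN M) : pDSD p σ M ≤ pDSDc p σ :=
  le_csSup ⟨1, by rintro _ ⟨N, hN, rfl⟩; exact pDSD_le_one hG hN.memRBN.isPOVM⟩ ⟨M, hM, rfl⟩

lemma pDSD_le_of_roBNFeasible (hG : IsEnsemble p σ) {r : ℝ} (hr : RoBNFeasible M r) :
    pDSD p σ M ≤ (1 + r) * pDSDc p σ := by
  obtain ⟨hr0, N, O, hN, hO, hdec⟩ := hr
  refine Real.sSup_le ?_ (mul_nonneg (by linarith) (pDSDc_nonneg hG))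
  rintro _ ⟨Q, hQ, rfl⟩
  obtain ⟨S, rfl⟩ := simulates_iff.1 hQ
  have hSdec : S.apply M + (r : ℂ) • S.apply N = ((1 + r : ℝ) : ℂ) • S.apply O := by
    rw [← map_smul, ← map_add, ← map_smul]
    exact congrArg S.apply (funext₂ hdec)
  have hval := congrArg (dsdValue p σ) hSdec
  rw [dsdValue_add, dsdValue_ofReal_smul, dsdValue_ofReal_smul] at hval
  have hNval := dsdValue_nonneg hG (S.apply_posSemidef hN.posSemidef)
  calc dsdValue p σ (S.apply M) ≤ (1 + r) * dsdValue p σ (S.apply O) := by nlinarith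
    _ ≤ (1 + r) * pDSD p σ O := by
      gcongr; exact dsdValue_le_pDSD hG hO.memRBN.isPOVM (simulates_iff.2 ⟨S, rfl⟩)
    _ ≤ (1 + r) * pDSDc p σ := by gcongr; exact pDSD_le_pDSDc hG hO

end GuessingProbability

lemma le_one_add_sInf_mul {S : Set ℝ} (hS : S.Nonempty) {c v : ℝ} (hc : 0 ≤ c)
    (h : ∀ r ∈ S, v ≤ (1 + r) * c) : v ≤ (1 + sInf S) * c := by
  rcases hc.eq_or_lt with rfl | hc
  · obtain ⟨r, hr⟩ := hS
    simpa using h r hr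
  · have hinf : v / c - 1 ≤ sInf S := le_csInf hS fun r hr => by
      rw [sub_le_iff_le_add, div_le_iff₀ hc]
      linarith [h r hr]
    calc v = (1 + (v / c - 1)) * c := by field_simp; ring
      _ ≤ (1 + sInf S) * c := by gcongr

/-- for every distributed measurement `M ∈ R_BN` and every ensemble,
`p_DSD(G, M) ≤ (1 + RoBN(M)) · p_DSD(G)`. -/
theorem dsd_upper_bound {dA dB oA oB : ℕ}
    (M : Fin oA → Fin oB → BMat dA dB) (hM : MemRBN M)
    (p : Fin oA → Fin oB → ℝ) (σ : Fin oA → Fin oB → BMat dA dB)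
    (hG : IsEnsemble p σ) :
    pDSD p σ M ≤ (1 + RoBN M) * pDSDc p σ :=
  le_one_add_sInf_mul hM.exists_roBNFeasible (pDSDc_nonneg hG) fun _ hr =>
    pDSD_le_of_roBNFeasible hG hr
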